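/- For every n ≥ 2, the list distinguishing number of the friendship graph F_n equals its distinguishing number: D_l(F_n) = D(F_n) = ⌈(1 + √(8n+1))/2⌉. -/

import Mathlib

/-- A labeling `φ` of the vertices of `G` is distinguishing if the only
automorphism of `G` preserving all labels is the identity. -/
def IsDistinguishing {V α : Type*} (G : SimpleGraph V) (φ : V → α) : Prop :=
  ∀ σ : G ≃g G, (∀ v, φ (σ v) = φ v) → ∀ v, σ v = v

/-- The distinguishing number `D(G)`. -/
noncomputable def distinguishingNumber {V : Type*} (G : SimpleGraph V) : ℕ :=
  sInf {r : ℕ | ∃ φ : V → Fin r, IsDistinguishing G φ}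

/-- The list distinguishing number `D_l(G)`. -/
noncomputable def listDistinguishingNumber {V : Type*} (G : SimpleGraph V) : ℕ :=
  sInf {k : ℕ | ∀ L : V → Finset ℕ, (∀ v, (L v).card = k) →
    ∃ φ : V → ℕ, (∀ v, φ v ∈ L v) ∧ IsDistinguishing G φ}

/-- The friendship graph `F_n`: `n` triangles sharing the common central
vertex `none`; the `i`-th triangle has non-central vertices `some (i, 0)`
and `some (i, 1)`. -/
def friendshipGraph (n : ℕ) : SimpleGraph (Option (Fin n × Fin 2)) :=
  SimpleGraph.fromRel (fun u v =>
    u = none ∨ ∃ p q : Fin n × Fin 2, u = some p ∧ v = some q ∧ p.1 = q.1)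


lemma fg_adj_none_some {n : ℕ} (p : Fin n × Fin 2) :
    (friendshipGraph n).Adj none (some p) := by
  simp [friendshipGraph, SimpleGraph.fromRel_adj]

lemma fg_adj_some_some {n : ℕ} (p q : Fin n × Fin 2) :
    (friendshipGraph n).Adj (some p) (some q) ↔ p ≠ q ∧ p.1 = q.1 := by
  simp only [friendshipGraph, SimpleGraph.fromRel_adj, ne_eq, Option.some.injEq,
    reduceCtorEq, false_or, exists_and_left, exists_eq_left']
  constructor
  · rintro ⟨h1, h2 | h2⟩ <;> exact ⟨h1, by tauto⟩
  · rintro ⟨h1, h2⟩; exact ⟨h1, Or.inl h2⟩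

def autOf {n : ℕ} (π : Equiv.Perm (Fin n)) (f : Fin n → Equiv.Perm (Fin 2)) :
    friendshipGraph n ≃g friendshipGraph n where
  toEquiv := (Equiv.prodShear π f).optionCongr
  map_rel_iff' := by
    rintro (_ | p) (_ | q)
    · simp [(friendshipGraph n).irrefl]
    · simpa using ⟨fun _ => fg_adj_none_some q, fun _ => fg_adj_none_some _⟩
    · simpa using ⟨fun _ => (fg_adj_none_some p).symm, fun _ => (fg_adj_none_some _).symm⟩
    · simp only [Equiv.optionCongr_apply, Option.map_some, fg_adj_some_some,
        Equiv.prodShear_apply, ne_eq]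
      constructor
      · rintro ⟨h1, h2⟩
        exact ⟨fun h => h1 (by rw [h]), π.injective h2⟩
      · rintro ⟨h1, h2⟩
        refine ⟨fun h => h1 ?_, by rw [h2]⟩
        have := (Equiv.prodShear π f).injective h
        exact this

lemma autOf_none {n : ℕ} (π : Equiv.Perm (Fin n)) (f : Fin n → Equiv.Perm (Fin 2)) :
    autOf π f none = none := rfl

lemma autOf_some {n : ℕ} (π : Equiv.Perm (Fin n)) (f : Fin n → Equiv.Perm (Fin 2))
    (i : Fin n) (j : Fin 2) : autOf π f (some (i, j)) = some (π i, f i j) := rfl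

lemma fin2_cases : ∀ a b : Fin 2, a ≠ b → (a = 0 ∧ b = 1) ∨ (a = 1 ∧ b = 0) := by decide

lemma fin2_cases' : ∀ j : Fin 2, j = 0 ∨ j = 1 := by decide

lemma sigma_none {n : ℕ} (hn : 2 ≤ n) (σ : friendshipGraph n ≃g friendshipGraph n) :
    σ none = none := by
  by_contra h
  obtain ⟨p, hp⟩ := Option.ne_none_iff_exists'.mp h
  obtain ⟨j, hj⟩ := Fintype.exists_ne_of_one_lt_card (by simp; omega) p.1
  set w : Option (Fin n × Fin 2) := some (j, 0) with hw
  have hwp : w ≠ some p := by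
    simp only [hw, ne_eq, Option.some.injEq]
    intro h'; exact hj (by rw [← h'])
  have h1 : σ (σ.symm w) = w := σ.apply_symm_apply w
  have h2 : σ.symm w ≠ none := by
    intro h'; rw [h', hp] at h1; exact hwp h1.symm
  obtain ⟨q, hq⟩ := Option.ne_none_iff_exists'.mp h2
  have hadj : (friendshipGraph n).Adj none (σ.symm w) := by
    rw [hq]; exact fg_adj_none_some q
  have h3 := σ.map_rel_iff.mpr hadj
  rw [hp, h1, hw, fg_adj_some_some] at h3
  exact hj h3.2.symm

lemma key_dist {n : ℕ} {α : Type*} (hn : 2 ≤ n) (φ : Option (Fin n × Fin 2) → α)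
    (H1 : ∀ i : Fin n, φ (some (i, 0)) ≠ φ (some (i, 1)))
    (H2 : Function.Injective fun i : Fin n => s(φ (some (i, 0)), φ (some (i, 1)))) :
    IsDistinguishing (friendshipGraph n) φ := by
  intro σ hφ
  have h0 := sigma_none hn σ
  have hsome : ∀ p : Fin n × Fin 2, ∃ q, σ (some p) = some q := by
    intro p
    refine Option.ne_none_iff_exists'.mp fun h' => ?_
    have := σ.injective (h'.trans h0.symm)
    exact (Option.some_ne_none p) this
  have main : ∀ i : Fin n, σ (some (i, 0)) = some (i, 0) ∧ σ (some (i, 1)) = some (i, 1) := by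
    intro i
    obtain ⟨q0, hq0⟩ := hsome (i, 0)
    obtain ⟨q1, hq1⟩ := hsome (i, 1)
    have hadj : (friendshipGraph n).Adj (some (i, 0)) (some (i, 1)) := by
      rw [fg_adj_some_some]; exact ⟨by simp, rfl⟩
    have hadj' := σ.map_rel_iff.mpr hadj
    rw [hq0, hq1, fg_adj_some_some] at hadj'
    obtain ⟨hne, hfst⟩ := hadj'
    have hl0 : φ (some q0) = φ (some (i, 0)) := by rw [← hq0]; exact hφ _
    have hl1 : φ (some q1) = φ (some (i, 1)) := by rw [← hq1]; exact hφ _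
    have hsnd : q0.2 ≠ q1.2 := fun h' => hne (Prod.ext hfst h')
    rcases fin2_cases _ _ hsnd with ⟨ha, hb⟩ | ⟨ha, hb⟩
    · have e0 : q0 = (q0.1, 0) := by rw [← ha]
      have e1 : q1 = (q0.1, 1) := by rw [← hb, hfst]
      have hs : s(φ (some (q0.1, 0)), φ (some (q0.1, 1))) = s(φ (some (i, 0)), φ (some (i, 1))) := by
        rw [← e0, ← e1, hl0, hl1]
      have hi := H2 hs
      constructor
      · rw [hq0, e0, hi]
      · rw [hq1, e1, hi]
    · have e0 : q0 = (q0.1, 1) := by rw [← ha]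
      have e1 : q1 = (q0.1, 0) := by rw [← hb, hfst]
      have hs : s(φ (some (q0.1, 0)), φ (some (q0.1, 1))) = s(φ (some (i, 0)), φ (some (i, 1))) := by
        rw [← e1, ← e0, hl0, hl1, Sym2.eq_swap]
      have hi := H2 hs
      exfalso
      apply H1 i
      rw [← hl0, e0, hi]
  intro v
  cases v with
  | none => exact h0
  | some p =>
    obtain ⟨i, j⟩ := p
    rcases fin2_cases j (if j = 0 then 1 else 0) (by split <;> simp_all) with ⟨hj, _⟩ | ⟨hj, _⟩
    · rw [hj]; exact (main i).1
    · rw [hj]; exact (main i).2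

-- H1 from distinguishing
lemma dist_H1 {n : ℕ} {α : Type*} (φ : Option (Fin n × Fin 2) → α)
    (h : IsDistinguishing (friendshipGraph n) φ) (i : Fin n) :
    φ (some (i, 0)) ≠ φ (some (i, 1)) := by
  intro heq
  classical
  set σ := autOf (1 : Equiv.Perm (Fin n)) (fun k => if k = i then Equiv.swap 0 1 else 1) with hσ
  have hpres : ∀ v, φ (σ v) = φ v := by
    rintro (_ | ⟨k, j⟩)
    · rw [hσ, autOf_none]
    · rw [hσ, autOf_some]
      by_cases hk : k = i
      · subst hk
        simp only [if_pos rfl, Equiv.Perm.one_apply]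
        rcases fin2_cases' j with hj | hj <;> subst hj <;>
          simp [Equiv.swap_apply_left, Equiv.swap_apply_right, heq]
      · simp [if_neg hk]
  have := h σ hpres (some (i, 0))
  rw [hσ, autOf_some] at this
  simp [if_pos rfl, Equiv.swap_apply_left] at this
-- H2 from distinguishing
lemma dist_H2 {n : ℕ} {α : Type*} (φ : Option (Fin n × Fin 2) → α)
    (h : IsDistinguishing (friendshipGraph n) φ) :
    Function.Injective fun i : Fin n => s(φ (some (i, 0)), φ (some (i, 1))) := by
  classical
  intro i j hij
  by_contra hne
  simp only [Sym2.eq_iff, Sym2.mk_eq_mk_iff, Prod.mk.injEq, Prod.swap_prod_mk] at hij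
  rcases hij with ⟨e0, e1⟩ | ⟨e0, e1⟩
  · -- straight: φ(i,0)=φ(j,0), φ(i,1)=φ(j,1)
    set σ := autOf (Equiv.swap i j) (fun _ => 1) with hσ
    have hpres : ∀ v, φ (σ v) = φ v := by
      rintro (_ | ⟨k, m⟩)
      · rw [hσ, autOf_none]
      · rw [hσ, autOf_some]
        simp only [Equiv.Perm.one_apply]
        rcases eq_or_ne k i with hk | hk
        · subst hk
          rw [Equiv.swap_apply_left]
          rcases fin2_cases' m with hm | hm <;> subst hm <;> simp [e0.symm, e1.symm]
        rcases eq_or_ne k j with hk' | hk'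
        · subst hk'
          rw [Equiv.swap_apply_right]
          rcases fin2_cases' m with hm | hm <;> subst hm <;> simp [e0, e1]
        · rw [Equiv.swap_apply_of_ne_of_ne hk hk']
    have := h σ hpres (some (i, 0))
    rw [hσ, autOf_some, Equiv.swap_apply_left] at this
    simp only [Option.some.injEq, Prod.mk.injEq] at this
    exact hne this.1.symm
  · -- crossed: φ(i,0)=φ(j,1), φ(i,1)=φ(j,0)
    set σ := autOf (Equiv.swap i j) (fun k => if k = i ∨ k = j then Equiv.swap 0 1 else 1) with hσ
    have hpres : ∀ v, φ (σ v) = φ v := by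
      rintro (_ | ⟨k, m⟩)
      · rw [hσ, autOf_none]
      · rw [hσ, autOf_some]
        rcases eq_or_ne k i with hk | hk
        · subst hk
          rw [Equiv.swap_apply_left, if_pos (Or.inl rfl)]
          rcases fin2_cases' m with hm | hm <;> subst hm <;>
            simp [Equiv.swap_apply_left, Equiv.swap_apply_right, e0.symm, e1.symm]
        rcases eq_or_ne k j with hk' | hk'
        · subst hk'
          rw [Equiv.swap_apply_right, if_pos (Or.inr rfl)]
          rcases fin2_cases' m with hm | hm <;> subst hm <;>
            simp [Equiv.swap_apply_left, Equiv.swap_apply_right, e0, e1]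
        · rw [Equiv.swap_apply_of_ne_of_ne hk hk', if_neg (by tauto)]
          simp
    have := h σ hpres (some (i, 0))
    rw [hσ, autOf_some, Equiv.swap_apply_left] at this
    simp only [Option.some.injEq, Prod.mk.injEq] at this
    exact hne this.1.symm


lemma count_lb {n r : ℕ} (φ0 φ1 : Fin n → Fin r)
    (H1 : ∀ i, φ0 i ≠ φ1 i)
    (H2 : Function.Injective fun i => s(φ0 i, φ1 i)) :
    2 * n ≤ r * (r - 1) := by
  classical
  have key : (Finset.univ : Finset (Fin n × Fin 2)).card ≤
      ((Finset.univ : Finset (Fin r)).offDiag).card := by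
    apply Finset.card_le_card_of_injOn
      (fun p => if p.2 = 0 then (φ0 p.1, φ1 p.1) else (φ1 p.1, φ0 p.1))
    · intro p _
      rcases (by decide : ∀ j : Fin 2, j = 0 ∨ j = 1) p.2 with hj | hj <;>
        simp [hj, Finset.mem_offDiag, H1 p.1, (H1 p.1).symm]
    · rintro ⟨i, a⟩ - ⟨j, b⟩ - hab
      have h10 : ¬(1 : Fin 2) = 0 := by decide
      rcases (by decide : ∀ j : Fin 2, j = 0 ∨ j = 1) a with ha | ha <;>
        rcases (by decide : ∀ j : Fin 2, j = 0 ∨ j = 1) b with hb | hb <;>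
          subst ha <;> subst hb <;>
          simp only [if_true, eq_self_iff_true, h10, if_false, Prod.mk.injEq] at hab
      · have : i = j := H2 (show s(φ0 i, φ1 i) = s(φ0 j, φ1 j) by rw [hab.1, hab.2])
        rw [this]
      · exfalso
        have : i = j := H2 (show s(φ0 i, φ1 i) = s(φ0 j, φ1 j) by
          rw [hab.1, hab.2]; exact Sym2.eq_swap)
        subst this
        exact H1 i hab.1
      · exfalso
        have : i = j := H2 (show s(φ0 i, φ1 i) = s(φ0 j, φ1 j) by
          rw [← hab.1, ← hab.2]; exact Sym2.eq_swap)
        subst this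
        exact H1 i hab.1.symm
      · have : i = j := H2 (show s(φ0 i, φ1 i) = s(φ0 j, φ1 j) by rw [hab.1, hab.2])
        rw [this]
  rw [Finset.offDiag_card] at key
  simp only [Finset.card_univ, Fintype.card_prod, Fintype.card_fin] at key
  calc 2 * n = n * 2 := by ring
  _ ≤ r * r - r := key
  _ = r * (r-1) := by rw [← Nat.pred_eq_sub_one, Nat.mul_pred]


lemma pairs_card {k n : ℕ} (hk : 2 * n ≤ k * (k - 1)) (A B : Finset ℕ)
    (hA : A.card = k) (hB : B.card = k) :
    n ≤ (((A ×ˢ B).filter fun a => ¬ a.1 = a.2).image (fun p : ℕ × ℕ => s(p.1, p.2))).card := by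
  classical
  set S := (A ×ˢ B).filter fun a => ¬ a.1 = a.2 with hS
  have hdiag : ((A ×ˢ B).filter fun p => p.1 = p.2).card ≤ k := by
    calc ((A ×ˢ B).filter fun p => p.1 = p.2).card
        ≤ A.card := Finset.card_le_card_of_injOn (fun p => p.1)
          (fun p hp => (Finset.mem_product.mp (Finset.mem_filter.mp hp).1).1)
          (by
            rintro ⟨a, b⟩ ha ⟨c, d⟩ hc h
            simp only [Finset.coe_filter, Set.mem_setOf_eq] at ha hc
            simp only at h
            exact Prod.ext h ((ha.2.symm.trans h).trans hc.2))
    _ = k := hA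
  have hScard : k * k - k ≤ S.card := by
    have := Finset.card_filter_add_card_filter_not (s := A ×ˢ B)
      (p := fun p => p.1 = p.2)
    rw [Finset.card_product, hA, hB] at this
    have e : (Finset.filter (fun a => ¬ a.1 = a.2) (A ×ˢ B)).card = S.card := rfl
    omega
  have himg : S.card ≤ 2 * (S.image (fun p : ℕ × ℕ => s(p.1, p.2))).card := by
    apply Finset.card_le_mul_card_image
    intro z hz
    obtain ⟨⟨a, b⟩, _, rfl⟩ := Finset.mem_image.mp hz
    have hsub : S.filter (fun p => s(p.1, p.2) = s(a, b)) ⊆ {(a, b), (b, a)} := by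
      intro p hp
      rcases (Sym2.mk_eq_mk_iff (p := p) (q := (a, b))).mp (Finset.mem_filter.mp hp).2 with h | h <;>
        simp [h, Prod.ext_iff] at * <;> simp [Finset.mem_insert, *]
    calc (S.filter (fun p => s(p.1, p.2) = s(a, b))).card
        ≤ ({(a, b), (b, a)} : Finset (ℕ × ℕ)).card := Finset.card_le_card hsub
    _ ≤ 2 := Finset.card_le_two
  have hkk : k * (k - 1) = k * k - k := by rw [← Nat.pred_eq_sub_one, Nat.mul_pred]
  omega

lemma construct {n k : ℕ} (hn : 2 ≤ n) (hk : 2 * n ≤ k * (k - 1))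
    (L : Option (Fin n × Fin 2) → Finset ℕ) (hL : ∀ v, (L v).card = k) :
    ∃ φ : Option (Fin n × Fin 2) → ℕ, (∀ v, φ v ∈ L v) ∧
      (∀ i : Fin n, φ (some (i, 0)) ≠ φ (some (i, 1))) ∧
      Function.Injective fun i : Fin n => s(φ (some (i, 0)), φ (some (i, 1))) := by
  classical
  set T : Fin n → Finset (Sym2 ℕ) := fun i =>
    ((L (some (i, 0)) ×ˢ L (some (i, 1))).filter fun a => ¬ a.1 = a.2).image (fun p : ℕ × ℕ => s(p.1, p.2)) with hT
  have hTcard : ∀ i, n ≤ (T i).card := fun i => pairs_card hk _ _ (hL _) (hL _)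
  have hall : ∀ s : Finset (Fin n), s.card ≤ (s.biUnion T).card := by
    intro s
    rcases s.eq_empty_or_nonempty with rfl | ⟨i, hi⟩
    · simp
    · calc s.card ≤ n := by simpa using Finset.card_le_univ s
      _ ≤ (T i).card := hTcard i
      _ ≤ (s.biUnion T).card := Finset.card_le_card (Finset.subset_biUnion_of_mem T hi)
  obtain ⟨t, htinj, htmem⟩ := (Finset.all_card_le_biUnion_card_iff_exists_injective T).mp hall
  have hex : ∀ i, ∃ p : ℕ × ℕ,
      (p ∈ (L (some (i, 0)) ×ˢ L (some (i, 1))).filter fun a => ¬ a.1 = a.2) ∧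
      s(p.1, p.2) = t i := by
    intro i
    have := htmem i
    rw [hT] at this
    exact Finset.mem_image.mp this
  choose pr hpr1 hpr2 using hex
  have hmem : ∀ i, (pr i).1 ∈ L (some (i, 0)) ∧ (pr i).2 ∈ L (some (i, 1)) ∧
      ¬ (pr i).1 = (pr i).2 := by
    intro i
    have := hpr1 i
    rw [Finset.mem_filter, Finset.mem_product] at this
    exact ⟨this.1.1, this.1.2, this.2⟩
  have hk2 : 2 ≤ k := by
    match k, hk with
    | 0, hk => omega
    | 1, hk => omega
    | (m+2), hk => omega
  have hnon : (L none).Nonempty := Finset.card_pos.mp (by rw [hL]; omega)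
  refine ⟨fun v => match v with
    | none => hnon.choose
    | some (i, j) => if j = 0 then (pr i).1 else (pr i).2, ?_, ?_, ?_⟩
  · rintro (_ | ⟨i, j⟩)
    · exact hnon.choose_spec
    · rcases (by decide : ∀ j : Fin 2, j = 0 ∨ j = 1) j with hj | hj <;> subst hj
      · simpa using (hmem i).1
      · simpa [(by decide : ¬(1 : Fin 2) = 0)] using (hmem i).2.1
  · intro i
    simpa [(by decide : ¬(1 : Fin 2) = 0)] using (hmem i).2.2
  · intro i j hij
    apply htinj
    simp only [if_pos rfl, if_neg (by decide : ¬(1 : Fin 2) = 0)] at hij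
    rw [← hpr2 i, ← hpr2 j]
    simpa using hij

lemma arith {n : ℕ} (hn : 2 ≤ n) (r : ℕ) :
    2 * n ≤ r * (r - 1) ↔ ⌈(1 + Real.sqrt (8 * n + 1)) / 2⌉₊ ≤ r := by
  have h81 : (0 : ℝ) ≤ 8 * (n : ℝ) + 1 := by positivity
  have hsq : (1 : ℝ) ≤ Real.sqrt (8 * n + 1) := by
    rw [show (1:ℝ) = Real.sqrt 1 by rw [Real.sqrt_one]]
    exact Real.sqrt_le_sqrt (by norm_num)
  constructor
  · intro h
    have hr1 : 1 ≤ r := by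
      by_contra h'
      interval_cases r <;> omega
    rw [Nat.ceil_le]
    have hcast : (2 * n : ℝ) ≤ (r : ℝ) * ((r : ℝ) - 1) := by
      have := (Nat.cast_le (α := ℝ)).mpr h
      push_cast [Nat.cast_sub hr1] at this
      convert this using 2 <;> push_cast <;> ring_nf
    have hsqle : Real.sqrt (8 * n + 1) ≤ 2 * (r : ℝ) - 1 := by
      have h2r : (0 : ℝ) ≤ 2 * (r : ℝ) - 1 := by
        have : (1 : ℝ) ≤ (r : ℝ) := by exact_mod_cast hr1
        linarith
      calc Real.sqrt (8 * n + 1) ≤ Real.sqrt ((2 * (r : ℝ) - 1) ^ 2) := by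
            apply Real.sqrt_le_sqrt; nlinarith
      _ = 2 * (r : ℝ) - 1 := Real.sqrt_sq h2r
    linarith
  · intro h
    rw [Nat.ceil_le] at h
    have hsqle : Real.sqrt (8 * n + 1) ≤ 2 * (r : ℝ) - 1 := by linarith
    have h2 : 8 * (n : ℝ) + 1 ≤ (2 * (r : ℝ) - 1) ^ 2 := by
      have := Real.sq_sqrt h81
      nlinarith [Real.sqrt_nonneg (8 * (n:ℝ) + 1)]
    have hr1 : 1 ≤ r := by
      by_contra h'
      push_neg at h'
      interval_cases r
      · norm_num at h2
        nlinarith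
    have : (2 * n : ℝ) ≤ (r : ℝ) * ((r : ℝ) - 1) := by nlinarith
    have : (2 * n : ℕ) ≤ r * (r - 1) := by
      have hcast : ((r * (r - 1) : ℕ) : ℝ) = (r : ℝ) * ((r : ℝ) - 1) := by
        push_cast [Nat.cast_sub hr1]; ring
      exact_mod_cast hcast ▸ this
    exact this


-- membership characterizations
lemma dist_mem_iff {n : ℕ} (hn : 2 ≤ n) (r : ℕ) :
    (∃ φ : Option (Fin n × Fin 2) → Fin r, IsDistinguishing (friendshipGraph n) φ) ↔
      2 * n ≤ r * (r - 1) := by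
  constructor
  · rintro ⟨φ, hφ⟩
    exact count_lb (fun i => φ (some (i, 0))) (fun i => φ (some (i, 1)))
      (dist_H1 φ hφ) (dist_H2 φ hφ)
  · intro h
    obtain ⟨φ, hmem, H1, H2⟩ := construct hn h (fun _ => Finset.range r)
      (fun _ => Finset.card_range r)
    refine ⟨fun v => ⟨φ v, Finset.mem_range.mp (hmem v)⟩, ?_⟩
    have hdist : IsDistinguishing (friendshipGraph n) φ := key_dist hn φ H1 H2
    intro σ hσ
    exact hdist σ (fun v => congrArg Fin.val (hσ v))

lemma list_mem_iff {n : ℕ} (hn : 2 ≤ n) (k : ℕ) :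
    (∀ L : Option (Fin n × Fin 2) → Finset ℕ, (∀ v, (L v).card = k) →
      ∃ φ : Option (Fin n × Fin 2) → ℕ, (∀ v, φ v ∈ L v) ∧
        IsDistinguishing (friendshipGraph n) φ) ↔ 2 * n ≤ k * (k - 1) := by
  constructor
  · intro h
    obtain ⟨φ, hmem, hφ⟩ := h (fun _ => Finset.range k) (fun _ => Finset.card_range k)
    rw [← dist_mem_iff hn]
    refine ⟨fun v => ⟨φ v, Finset.mem_range.mp (hmem v)⟩, ?_⟩
    intro σ hσ
    exact hφ σ (fun v => congrArg Fin.val (hσ v))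
  · intro h L hL
    obtain ⟨φ, hmem, H1, H2⟩ := construct hn h L hL
    exact ⟨φ, hmem, key_dist hn φ H1 H2⟩

/-- For every `n ≥ 2`, `D_l(F_n) = D(F_n) = ⌈(1 + √(8n+1))/2⌉`. -/
theorem stmt_5 (n : ℕ) (hn : 2 ≤ n) :
    listDistinguishingNumber (friendshipGraph n) = distinguishingNumber (friendshipGraph n) ∧
    distinguishingNumber (friendshipGraph n) = ⌈(1 + Real.sqrt (8 * n + 1)) / 2⌉₊ := by
  set c := ⌈(1 + Real.sqrt (8 * n + 1)) / 2⌉₊ with hc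
  have hdist : distinguishingNumber (friendshipGraph n) = c := by
    unfold distinguishingNumber
    have : {r : ℕ | ∃ φ : Option (Fin n × Fin 2) → Fin r,
        IsDistinguishing (friendshipGraph n) φ} = Set.Ici c := by
      ext r
      rw [Set.mem_setOf_eq, Set.mem_Ici, dist_mem_iff hn, arith hn]
    rw [this, csInf_Ici]
  have hlist : listDistinguishingNumber (friendshipGraph n) = c := by
    unfold listDistinguishingNumber
    have : {k : ℕ | ∀ L : Option (Fin n × Fin 2) → Finset ℕ, (∀ v, (L v).card = k) →
        ∃ φ : Option (Fin n × Fin 2) → ℕ, (∀ v, φ v ∈ L v) ∧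
          IsDistinguishing (friendshipGraph n) φ} = Set.Ici c := by
      ext k
      rw [Set.mem_setOf_eq, Set.mem_Ici, list_mem_iff hn, arith hn]
    rw [this, csInf_Ici]
  exact ⟨hlist.trans hdist.symm, hdist⟩
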